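/- arXiv:0803.3353 — 10 statements merged into one kernel-verified Lean document; each statement's English description precedes it below -/
import Mathlib

section
/- Let R be an associative ring with identity, let a, b ∈ C(R), and let g(x) ∈ C(R)[x] be a polynomial of the form g(x) = (x−a)(x−b)h(x) for some h(x) ∈ C(R)[x]. If R is strongly clean and b − a is a unit of R, then R is strongly g(x)-clean, i.e., every r ∈ R can be written as r = s + u where g(s) = 0, u is a unit of R, and su = us. -/
/-!
Since `b - a` is a central unit, the affine map `x ↦ a + (b - a) x` is invertible and preserves
commutation. It carries a strongly clean decomposition `(b - a)⁻¹ (r - a) = e + u` to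
`r = (a + (b - a) e) + (b - a) u`, and the idempotent `e`, a root of `x (x - 1)`, to a root `s`
of `(x - a)(x - b)`. As `h` has central coefficients, `g(s) = (s - a)(s - b) h(s) = 0`.
-/

/-- A ring is *strongly clean* if every element is the sum of an idempotent
and a unit that commute. -/
def StronglyClean (R : Type*) [Ring R] : Prop :=
  ∀ r : R, ∃ e u : R, e * e = e ∧ IsUnit u ∧ r = e + u ∧ e * u = u * e

open Polynomial

section

variable {R : Type*} [Ring R]

theorem Polynomial.eval_mul_of_commute {p q : R[X]} {x : R} (hq : ∀ k, Commute (q.coeff k) x) :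
    (p * q).eval x = p.eval x * q.eval x :=
  eval₂_mul_noncomm _ _ hq

theorem Polynomial.eval_X_sub_C_mul_X_sub_C {a b x : R} (hb : Commute b x) :
    ((X - C a) * (X - C b)).eval x = (x - a) * (x - b) := by
  rw [mul_sub, eval_sub, eval_mul_X, eval_mul_C_of_commute hb, ← mul_sub, eval_sub, eval_X,
    eval_C]

theorem IsIdempotentElem.affine_sub_mul_affine_sub_eq_zero {e : R} (he : IsIdempotentElem e)
    (a b : R) (hc : Commute (b - a) e) :
    (a + (b - a) * e - a) * (a + (b - a) * e - b) = 0 := by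
  have hsb : a + (b - a) * e - b = (b - a) * (e - 1) := by noncomm_ring
  rw [add_sub_cancel_left, hsb, hc.symm.mul_mul_mul_comm, mul_sub_one, he.eq, sub_self, mul_zero]

theorem StronglyClean.exists_sub_mul_sub_eq_zero_add_isUnit (hsc : StronglyClean R) {a b : R}
    (ha : a ∈ Set.center R) (hb : b ∈ Set.center R) (hba : IsUnit (b - a)) (r : R) :
    ∃ s u : R, (s - a) * (s - b) = 0 ∧ IsUnit u ∧ r = s + u ∧ s * u = u * s := by
  have hc : ∀ x, Commute (b - a) x := fun x => (hb.comm x).sub_left (ha.comm x)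
  obtain ⟨e, u, he, hu, heu, hcomm⟩ := hsc (hba.unit⁻¹ * (r - a))
  refine ⟨a + (b - a) * e, (b - a) * u,
    IsIdempotentElem.affine_sub_mul_affine_sub_eq_zero he a b (hc e), hba.mul hu, ?_, ?_⟩
  · calc r = a + (b - a) * (hba.unit⁻¹ * (r - a)) := by
          rw [← mul_assoc, IsUnit.mul_val_inv, one_mul, add_sub_cancel]
      _ = a + (b - a) * e + (b - a) * u := by rw [heu, mul_add, add_assoc]
  · have hs : Commute (a + (b - a) * e) ((b - a) * u) :=
      (ha.comm _).add_left ((hc _).mul_left ((hc e).symm.mul_right hcomm))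
    exact hs.eq

end

/-- If `g(x) = (x−a)(x−b)h(x)` with `a, b` central and `h` having central
coefficients, and `R` is strongly clean with `b − a` a unit, then `R` is
strongly `g(x)`-clean. -/
theorem strongly_gx_clean_of_stronglyClean (R : Type*) [Ring R] (a b : R)
    (ha : a ∈ Set.center R) (hb : b ∈ Set.center R)
    (h : Polynomial R) (hh : ∀ i, h.coeff i ∈ Set.center R)
    (g : Polynomial R) (hg : g = (Polynomial.X - Polynomial.C a) *
      (Polynomial.X - Polynomial.C b) * h)
    (hsc : StronglyClean R) (hba : IsUnit (b - a)) :
    ∀ r : R, ∃ s u : R, g.eval s = 0 ∧ IsUnit u ∧ r = s + u ∧ s * u = u * s := by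
  intro r
  obtain ⟨s, u, hs, hu, hr, hsu⟩ := hsc.exists_sub_mul_sub_eq_zero_add_isUnit ha hb hba r
  refine ⟨s, u, ?_, hu, hr, hsu⟩
  rw [hg, eval_mul_of_commute fun k => (hh k).comm s, eval_X_sub_C_mul_X_sub_C (hb.comm s), hs,
    zero_mul]
end

section
/- An associative ring R with identity is strongly clean if and only if R is strongly (x²+x)-clean, i.e., every r ∈ R can be written as r = s + u where s² + s = 0, u is a unit of R, and su = us. -/
/-- `R` is strongly clean iff `R` is strongly `(x² + x)`-clean. -/
theorem stronglyClean_iff_strongly_sq_add_x_clean (R : Type*) [Ring R] :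
    StronglyClean R ↔
      (∀ r : R, ∃ s u : R, s * s + s = 0 ∧ IsUnit u ∧ r = s + u ∧ s * u = u * s) := by
  constructor
  · intro h r
    obtain ⟨e, u, he, hu, hr, hc⟩ := h (-r)
    refine ⟨-e, -u, by rw [neg_mul_neg, he, add_neg_cancel], hu.neg, by rw [← neg_add, ← hr, neg_neg],
      by rw [neg_mul_neg, neg_mul_neg, hc]⟩
  · intro h r
    obtain ⟨s, u, hs, hu, hr, hc⟩ := h (-r)
    refine ⟨-s, -u, ?_, hu.neg, by rw [← neg_add, ← hr, neg_neg],
      by rw [neg_mul_neg, neg_mul_neg, hc]⟩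
    rw [neg_mul_neg]
    rw [eq_neg_iff_add_eq_zero]; exact hs
end

section
/- Let R be an associative ring with identity, n > 1 a natural number, and g(x) a polynomial with all coefficients in the center C(R) of R. Let T_n(R) denote the ring of n × n upper triangular matrices over R (matrices M with M_{ij} = 0 for j < i), and regard g(x) as a polynomial over T_n(R) by replacing each coefficient a by the scalar matrix a·I (which is central in T_n(R)). If T_n(R) is strongly g(x)-clean, then R is strongly g(x)-clean. -/
open Polynomial

/-- The subring `T_n(R)` of `n × n` upper triangular matrices over `R`
(matrices `M` with `M i j = 0` whenever `j < i`). -/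
def upperTriangularSubring (R : Type*) [Ring R] (n : ℕ) :
    Subring (Matrix (Fin n) (Fin n) R) where
  carrier := {M | ∀ i j : Fin n, j < i → M i j = 0}
  zero_mem' := fun _ _ _ => rfl
  one_mem' := fun _ _ hij => Matrix.one_apply_ne hij.ne'
  add_mem' := fun hA hB i j hij => by
    simp [Matrix.add_apply, hA i j hij, hB i j hij]
  neg_mem' := fun hA i j hij => by
    simp [Matrix.neg_apply, hA i j hij]
  mul_mem' := fun {A B} hA hB i j hij => by
    rw [Matrix.mul_apply]
    refine Finset.sum_eq_zero fun k _ => ?_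
    rcases lt_or_ge k i with h | h
    · rw [hA i k h, zero_mul]
    · rw [hB k j (lt_of_lt_of_le hij h), mul_zero]

/-- The canonical ring homomorphism `R → T_n(R)` sending `a` to the scalar
matrix `a • I` (which is central in `T_n(R)`). -/
def scalarToUpperTriangular (R : Type*) [Ring R] (n : ℕ) :
    R →+* upperTriangularSubring R n :=
  (Matrix.scalar (Fin n)).codRestrict (upperTriangularSubring R n).toSubsemiring
    (fun r i j hij => Matrix.diagonal_apply_ne _ hij.ne')

/-! Taking a diagonal entry is a ring homomorphism `T_n(R) → R`, since `(AB)ᵢᵢ = AᵢᵢBᵢᵢ` for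
upper triangular `A`, `B`, and it sends the scalar matrix `r • I` back to `r`. Ring homomorphisms
preserve units, commutation and roots of the mapped polynomial, so a strongly `g(x)`-clean
decomposition of `r • I` in `T_n(R)` projects to one of `r`. -/

section

variable {R T : Type*} [Ring R] [Ring T]

def IsStronglyClean (g : R[X]) (r : R) : Prop :=
  ∃ s u : R, g.eval s = 0 ∧ IsUnit u ∧ r = s + u ∧ s * u = u * s

theorem IsStronglyClean.map (f : T →+* R) {p : T[X]} {a : T} (h : IsStronglyClean p a) :
    IsStronglyClean (p.map f) (f a) := by
  obtain ⟨s, u, hs, hu, rfl, hsu⟩ := h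
  refine ⟨f s, f u, ?_, hu.map f, map_add f s u, ?_⟩
  · rw [eval_map, eval₂_at_apply, hs, map_zero]
  · rw [← map_mul, hsu, map_mul]

namespace upperTriangularSubring

variable {n : ℕ}

def diagEntry (i : Fin n) : upperTriangularSubring R n →+* R where
  toFun M := M.1 i i
  map_one' := Matrix.one_apply_eq i
  map_mul' A B := by
    change (A.1 * B.1) i i = _
    rw [Matrix.mul_apply]
    refine Finset.sum_eq_single i (fun k _ hki => ?_) (by simp)
    rcases lt_or_gt_of_ne hki with hlt | hgt
    · rw [A.2 i k hlt, zero_mul]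
    · rw [B.2 k i hgt, mul_zero]
  map_zero' := rfl
  map_add' _ _ := rfl

theorem diagEntry_comp_scalarToUpperTriangular (i : Fin n) :
    (diagEntry i).comp (scalarToUpperTriangular R n) = RingHom.id R := by
  ext a
  exact Matrix.diagonal_apply_eq _ i

end upperTriangularSubring

end

open upperTriangularSubring in
theorem strongly_gx_clean_of_upperTriangular_general (R : Type*) [Ring R] (n : ℕ) (hn : 1 < n)
    (g : Polynomial R)
    (hT : ∀ A : upperTriangularSubring R n, ∃ S U : upperTriangularSubring R n,
      (g.map (scalarToUpperTriangular R n)).eval S = 0 ∧ IsUnit U ∧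
        A = S + U ∧ S * U = U * S) :
    ∀ r : R, ∃ s u : R, g.eval s = 0 ∧ IsUnit u ∧ r = s + u ∧ s * u = u * s := by
  intro r
  let d : upperTriangularSubring R n →+* R := diagEntry ⟨0, by omega⟩
  have hd : d.comp (scalarToUpperTriangular R n) = RingHom.id R :=
    diagEntry_comp_scalarToUpperTriangular _
  have h := IsStronglyClean.map d (hT (scalarToUpperTriangular R n r))
  rwa [map_map, hd, Polynomial.map_id, ← RingHom.comp_apply, hd, RingHom.id_apply] at h

/-- If the upper triangular matrix ring `T_n(R)` (`n > 1`) is strongly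
`g(x)`-clean, where `g` has central coefficients and is regarded over `T_n(R)`
by mapping each coefficient to a scalar matrix, then `R` is strongly
`g(x)`-clean. -/
theorem strongly_gx_clean_of_upperTriangular (R : Type*) [Ring R] (n : ℕ) (hn : 1 < n)
    (g : Polynomial R) (hg : ∀ i, g.coeff i ∈ Set.center R)
    (hT : ∀ A : upperTriangularSubring R n, ∃ S U : upperTriangularSubring R n,
      (g.map (scalarToUpperTriangular R n)).eval S = 0 ∧ IsUnit U ∧
        A = S + U ∧ S * U = U * S) :
    ∀ r : R, ∃ s u : R, g.eval s = 0 ∧ IsUnit u ∧ r = s + u ∧ s * u = u * s :=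
  strongly_gx_clean_of_upperTriangular_general R n hn g hT
end

section
/- Let R be an associative ring with identity, a, b ∈ C(R), and suppose R is strongly (x−a)(x−b)-clean. Then for any idempotent e ∈ R, the corner ring eRe is strongly (x−ea)(x−eb)-clean: for every x ∈ R with x = exe there exist s, u ∈ R with s = ese and u = eue such that x = s + u, (s − ea)(s − eb) = 0, su = us, and u is a unit of eRe (i.e., there exists v = eve ∈ R with uv = vu = e). -/
/-- Core step: a "strongly clean" decomposition of `z + 1 - e` in `R` induces a
strongly clean decomposition of `z` in the corner ring `eRe`. -/
lemma corner_clean_step (R : Type*) [Ring R] (e z s u iu : R)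
    (he : e * e = e) (hez : e * z = z) (hze : z * e = z)
    (hss : s * s = s) (hr : z + 1 - e = s + u) (hsu : s * u = u * s)
    (hui : u * iu = 1) (hiu : iu * u = 1) (hsi : s * iu = iu * s) :
    ∃ Q V' : R, Q * Q = Q ∧ e * Q * e = Q ∧ Q * z = z * Q ∧ e * V' * e = V' ∧
      (z - Q) * V' = e ∧ V' * (z - Q) = e := by
  have hu : u = z + 1 - e - s := by rw [hr]; abel
  have hze' : z - e = s + u - 1 := by rw [← hr]; abel
  -- e * s = s
  have h2 : (z - e) * s = s * u := by
    calc (z - e) * s = (s + u - 1) * s := by rw [hze']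
      _ = s * s + u * s - s := by noncomm_ring
      _ = u * s := by rw [hss]; abel
      _ = s * u := hsu.symm
  have h3 : (z - e) * (s * iu) = s := by
    rw [← mul_assoc, h2, mul_assoc, hui, mul_one]
  have h4 : e * (z - e) = z - e := by rw [mul_sub, hez, he]
  have hes : e * s = s := by
    calc e * s = e * ((z - e) * (s * iu)) := by rw [h3]
      _ = (e * (z - e)) * (s * iu) := by rw [← mul_assoc]
      _ = (z - e) * (s * iu) := by rw [h4]
      _ = s := h3
  -- s * z = z * (s * e)
  have hcomm : s * (z + 1 - e) = (z + 1 - e) * s := by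
    rw [hr, mul_add, add_mul, hsu]
  have h5 : s * z = z * s - s + s * e := by
    have h : s * z + s - s * e = z * s + s - s := by
      calc s * z + s - s * e = s * (z + 1 - e) := by noncomm_ring
        _ = (z + 1 - e) * s := hcomm
        _ = z * s + s - e * s := by noncomm_ring
        _ = z * s + s - s := by rw [hes]
    calc s * z = (s * z + s - s * e) + (s * e - s) := by abel
      _ = (z * s + s - s) + (s * e - s) := by rw [h]
      _ = z * s - s + s * e := by abel
  have hsz : s * z = z * (s * e) := by
    calc s * z = (s * z) * e := by rw [mul_assoc, hze]
      _ = (z * s - s + s * e) * e := by rw [h5]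
      _ = z * (s * e) - s * e + s * (e * e) := by noncomm_ring
      _ = z * (s * e) := by rw [he]; abel
  -- Q := s * e facts
  have hQQ : (s * e) * (s * e) = s * e := by
    calc (s * e) * (s * e) = s * (e * s) * e := by noncomm_ring
      _ = s * s * e := by rw [hes]
      _ = s * e := by rw [hss]
  have hQc : e * (s * e) * e = s * e := by
    calc e * (s * e) * e = (e * s) * (e * e) := by noncomm_ring
      _ = s * e := by rw [hes, he]
  have hQz : (s * e) * z = z * (s * e) := by
    calc (s * e) * z = s * (e * z) := by rw [mul_assoc]
      _ = s * z := by rw [hez]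
      _ = z * (s * e) := hsz
  -- e * (iu * e) = iu * e
  have hsg : s * (e - s * e) = 0 := by
    calc s * (e - s * e) = s * e - (s * s) * e := by noncomm_ring
      _ = 0 := by rw [hss]; abel
  have hrt : (z + 1 - e) * (iu * (e - s * e)) = e - s * e := by
    calc (z + 1 - e) * (iu * (e - s * e)) = (s + u) * (iu * (e - s * e)) := by rw [hr]
      _ = (s * iu) * (e - s * e) + (u * iu) * (e - s * e) := by noncomm_ring
      _ = (iu * s) * (e - s * e) + 1 * (e - s * e) := by rw [hsi, hui]
      _ = iu * (s * (e - s * e)) + (e - s * e) := by noncomm_ring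
      _ = e - s * e := by rw [hsg, mul_zero, zero_add]
  have her : e * (z + 1 - e) = z := by
    calc e * (z + 1 - e) = e * z + e - e * e := by noncomm_ring
      _ = z := by rw [hez, he]; abel
  have h7 : (z + 1 - e) - e * (z + 1 - e) = 1 - e := by rw [her]; abel
  have heg : e * (e - s * e) = e - s * e := by
    calc e * (e - s * e) = e * e - (e * s) * e := by noncomm_ring
      _ = e - s * e := by rw [he, hes]
  have ht : e * (iu * (e - s * e)) = iu * (e - s * e) := by
    have h8 : iu * (e - s * e) - e * (iu * (e - s * e)) = 0 := by
      calc iu * (e - s * e) - e * (iu * (e - s * e))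
          = (1 - e) * (iu * (e - s * e)) := by noncomm_ring
        _ = ((z + 1 - e) - e * (z + 1 - e)) * (iu * (e - s * e)) := by rw [h7]
        _ = (z + 1 - e) * (iu * (e - s * e))
              - e * ((z + 1 - e) * (iu * (e - s * e))) := by noncomm_ring
        _ = (e - s * e) - e * (e - s * e) := by rw [hrt]
        _ = 0 := by rw [heg]; abel
    calc e * (iu * (e - s * e))
        = iu * (e - s * e) - (iu * (e - s * e) - e * (iu * (e - s * e))) := by abel
      _ = iu * (e - s * e) := by rw [h8]; abel
  have habs1 : e * (iu * (s * e)) = iu * (s * e) := by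
    calc e * (iu * (s * e)) = e * ((iu * s) * e) := by noncomm_ring
      _ = e * ((s * iu) * e) := by rw [← hsi]
      _ = ((e * s) * iu) * e := by noncomm_ring
      _ = (s * iu) * e := by rw [hes]
      _ = iu * (s * e) := by rw [hsi, mul_assoc]
  have hiue : e * (iu * e) = iu * e := by
    have hsplit : iu * e = iu * (s * e) + iu * (e - s * e) := by noncomm_ring
    rw [hsplit, mul_add, habs1, ht]
  have hV'c : e * (iu * e) * e = iu * e := by
    rw [hiue, mul_assoc, he]
  have hVdecomp : z - s * e = u + (s - s * e) + (e - 1) := by rw [hu]; abel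
  have hVV' : (z - s * e) * (iu * e) = e := by
    calc (z - s * e) * (iu * e)
        = u * (iu * e) + (s * (iu * e) - s * (e * (iu * e)))
            + (e * (iu * e) - iu * e) := by rw [hVdecomp]; noncomm_ring
      _ = u * (iu * e) + (s * (iu * e) - s * (iu * e)) + (iu * e - iu * e) := by
            rw [hiue]
      _ = (u * iu) * e := by rw [← mul_assoc]; abel
      _ = e := by rw [hui, one_mul]
  have h9 : (iu * e) * (z - s * e) = iu * (z - s * e) := by
    calc (iu * e) * (z - s * e) = iu * (e * z) - iu * ((e * s) * e) := by noncomm_ring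
      _ = iu * z - iu * (s * e) := by rw [hez, hes]
      _ = iu * (z - s * e) := by noncomm_ring
  have h10 : u * (1 - e) = (1 - e) - s * (1 - e) := by
    calc u * (1 - e) = (z + 1 - e - s) * (1 - e) := by rw [hu]
      _ = (z - z * e) + ((1 - e) - (e - e * e)) - s * (1 - e) := by noncomm_ring
      _ = (1 - e) - s * (1 - e) := by rw [hze, he]; abel
  have h11 : iu * ((1 - e) - s * (1 - e)) = 1 - e := by
    rw [← h10, ← mul_assoc, hiu, one_mul]
  have h12 : iu * (z - s * e) = e := by
    calc iu * (z - s * e)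
        = iu * u - iu * ((1 - e) - s * (1 - e)) := by rw [hVdecomp]; noncomm_ring
      _ = 1 - (1 - e) := by rw [hiu, h11]
      _ = e := by abel
  exact ⟨s * e, iu * e, hQQ, hQc, hQz, hV'c, hVV', h9.trans h12⟩

/-- If `R` is strongly `(x−a)(x−b)`-clean with `a, b` central, then for any
idempotent `e`, the corner ring `eRe` is strongly `(x−ea)(x−eb)`-clean. -/
theorem corner_strongly_clean (R : Type*) [Ring R] (a b : R)
    (ha : a ∈ Set.center R) (hb : b ∈ Set.center R)
    (hR : ∀ r : R, ∃ s u : R, (s - a) * (s - b) = 0 ∧ IsUnit u ∧ r = s + u ∧ s * u = u * s)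
    (e : R) (he : e * e = e) :
    ∀ x : R, x = e * x * e → ∃ s u : R, s = e * s * e ∧ u = e * u * e ∧
      x = s + u ∧ (s - e * a) * (s - e * b) = 0 ∧ s * u = u * s ∧
      ∃ v : R, v = e * v * e ∧ u * v = e ∧ v * u = e := by
  intro x hx
  have haC : ∀ y : R, a * y = y * a := fun y => (Set.mem_center_iff.mp ha).comm y
  have hbC : ∀ y : R, b * y = y * b := fun y => (Set.mem_center_iff.mp hb).comm y
  have hwC : ∀ y : R, (b - a) * y = y * (b - a) := by
    intro y; rw [sub_mul, mul_sub, haC, hbC]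
  have hex : e * x = x := by
    nth_rewrite 1 [hx]
    rw [← mul_assoc, ← mul_assoc, he, ← hx]
  have hxe : x * e = x := by
    nth_rewrite 1 [hx]
    rw [mul_assoc, he, ← hx]
  -- Step 1: b - a is a unit
  obtain ⟨s₀, u₀, h₀q, h₀u, h₀e, -⟩ := hR a
  obtain ⟨U₀, hU₀⟩ := h₀u
  have hs₀ : s₀ - a = -u₀ := by rw [h₀e]; abel
  have h1 : u₀ * (s₀ - b) = 0 := by
    have h := h₀q
    rw [hs₀, neg_mul, neg_eq_zero] at h
    exact h
  have hs₀b : s₀ = b := by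
    have h : s₀ - b = 0 := by
      calc s₀ - b = ((↑U₀⁻¹ : R) * u₀) * (s₀ - b) := by rw [← hU₀, Units.inv_mul, one_mul]
        _ = (↑U₀⁻¹ : R) * (u₀ * (s₀ - b)) := by rw [mul_assoc]
        _ = 0 := by rw [h1, mul_zero]
    exact sub_eq_zero.mp h
  have hw : b - a = -u₀ := by rw [h₀e, hs₀b]; abel
  set W : R := -(↑U₀⁻¹ : R) with hW_def
  have hwW : (b - a) * W = 1 := by
    rw [hw, hW_def, neg_mul_neg, ← hU₀, Units.mul_inv]
  have hWw : W * (b - a) = 1 := by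
    rw [hw, hW_def, neg_mul_neg, ← hU₀, Units.inv_mul]
  have hWC : ∀ y : R, W * y = y * W := by
    intro y
    calc W * y = (W * y) * ((b - a) * W) := by rw [hwW, mul_one]
      _ = W * (y * (b - a)) * W := by noncomm_ring
      _ = W * ((b - a) * y) * W := by rw [← hwC]
      _ = (W * (b - a)) * (y * W) := by noncomm_ring
      _ = y * W := by rw [hWw, one_mul]
  set z : R := (x - e * a) * W with hz_def
  have heea : e * (e * a) = e * a := by rw [← mul_assoc, he]
  have heae : (e * a) * e = e * a := by
    rw [mul_assoc, haC e]; exact heea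
  have hez : e * z = z := by
    rw [hz_def, ← mul_assoc, mul_sub, hex, heea]
  have hze : z * e = z := by
    rw [hz_def, mul_assoc, hWC e, ← mul_assoc, sub_mul, hxe, heae]
  -- Step 2: strongly clean decomposition of z + 1 - e
  obtain ⟨s₁, u₁, h₁q, h₁u, h₁e, h₁c⟩ := hR ((b - a) * (z + 1 - e) + a)
  obtain ⟨U₁, hU₁⟩ := h₁u
  set d : R := (↑U₁⁻¹ : R) with hd_def
  have hud : u₁ * d = 1 := by rw [hd_def, ← hU₁, Units.mul_inv]
  have hdu : d * u₁ = 1 := by rw [hd_def, ← hU₁, Units.inv_mul]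
  set s : R := (s₁ - a) * W with hs_def
  set u : R := u₁ * W with hu_def
  set iu : R := d * (b - a) with hiu_def
  have hsplit : s₁ - b = (s₁ - a) - (b - a) := by abel
  have hsq : (s₁ - a) * (s₁ - a) = (s₁ - a) * (b - a) := by
    have h := h₁q
    rw [hsplit, mul_sub] at h
    exact sub_eq_zero.mp h
  have hss : s * s = s := by
    rw [hs_def]
    calc ((s₁ - a) * W) * ((s₁ - a) * W) = ((s₁ - a) * (W * (s₁ - a))) * W := by noncomm_ring
      _ = ((s₁ - a) * ((s₁ - a) * W)) * W := by rw [hWC]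
      _ = ((s₁ - a) * (s₁ - a)) * (W * W) := by noncomm_ring
      _ = ((s₁ - a) * (b - a)) * (W * W) := by rw [hsq]
      _ = (s₁ - a) * (((b - a) * W) * W) := by noncomm_ring
      _ = (s₁ - a) * W := by rw [hwW, one_mul]
  have habs : ∀ y : R, ((b - a) * y) * W = y := by
    intro y; rw [hwC y, mul_assoc, hwW, mul_one]
  have h13 : (b - a) * (z + 1 - e) = (s₁ - a) + u₁ := by
    calc (b - a) * (z + 1 - e) = ((b - a) * (z + 1 - e) + a) - a := by abel
      _ = (s₁ + u₁) - a := by rw [← h₁e]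
      _ = (s₁ - a) + u₁ := by abel
  have hr : z + 1 - e = s + u := by
    calc z + 1 - e = ((b - a) * (z + 1 - e)) * W := (habs _).symm
      _ = ((s₁ - a) + u₁) * W := by rw [h13]
      _ = s + u := by rw [add_mul, ← hs_def, ← hu_def]
  have hsau : (s₁ - a) * u₁ = u₁ * (s₁ - a) := by
    rw [sub_mul, mul_sub, h₁c, haC u₁]
  have hsu : s * u = u * s := by
    rw [hs_def, hu_def]
    calc ((s₁ - a) * W) * (u₁ * W) = ((s₁ - a) * (W * u₁)) * W := by noncomm_ring
      _ = ((s₁ - a) * (u₁ * W)) * W := by rw [hWC]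
      _ = ((s₁ - a) * u₁) * (W * W) := by noncomm_ring
      _ = (u₁ * (s₁ - a)) * (W * W) := by rw [hsau]
      _ = (u₁ * ((s₁ - a) * W)) * W := by noncomm_ring
      _ = (u₁ * (W * (s₁ - a))) * W := by rw [← hWC (s₁ - a)]
      _ = (u₁ * W) * ((s₁ - a) * W) := by noncomm_ring
  have hui : u * iu = 1 := by
    rw [hu_def, hiu_def]
    calc (u₁ * W) * (d * (b - a)) = (u₁ * (W * d)) * (b - a) := by noncomm_ring
      _ = (u₁ * (d * W)) * (b - a) := by rw [hWC]
      _ = (u₁ * d) * (W * (b - a)) := by noncomm_ring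
      _ = 1 := by rw [hud, hWw, one_mul]
  have hiu2 : iu * u = 1 := by
    rw [hu_def, hiu_def]
    calc (d * (b - a)) * (u₁ * W) = (d * ((b - a) * u₁)) * W := by noncomm_ring
      _ = (d * (u₁ * (b - a))) * W := by rw [hwC]
      _ = (d * u₁) * ((b - a) * W) := by noncomm_ring
      _ = 1 := by rw [hdu, hwW, one_mul]
  have hsad : (s₁ - a) * d = d * (s₁ - a) := by
    calc (s₁ - a) * d = (d * u₁) * ((s₁ - a) * d) := by rw [hdu, one_mul]
      _ = d * ((u₁ * (s₁ - a)) * d) := by noncomm_ring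
      _ = d * (((s₁ - a) * u₁) * d) := by rw [← hsau]
      _ = (d * (s₁ - a)) * (u₁ * d) := by noncomm_ring
      _ = d * (s₁ - a) := by rw [hud, mul_one]
  have hsi : s * iu = iu * s := by
    rw [hs_def, hiu_def]
    calc ((s₁ - a) * W) * (d * (b - a)) = ((s₁ - a) * (W * d)) * (b - a) := by noncomm_ring
      _ = ((s₁ - a) * (d * W)) * (b - a) := by rw [hWC]
      _ = ((s₁ - a) * d) * (W * (b - a)) := by noncomm_ring
      _ = (s₁ - a) * d := by rw [hWw, mul_one]
      _ = d * (s₁ - a) := hsad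
      _ = (d * (s₁ - a)) * ((b - a) * W) := by rw [hwW, mul_one]
      _ = (d * ((s₁ - a) * (b - a))) * W := by noncomm_ring
      _ = (d * ((b - a) * (s₁ - a))) * W := by rw [← hwC]
      _ = (d * (b - a)) * ((s₁ - a) * W) := by noncomm_ring
  obtain ⟨Q, V', hQQ, hQc, hQz, hV'c, hVV', hV'V⟩ :=
    corner_clean_step R e z s u iu he hez hze hss hr hsu hui hiu2 hsi
  have hQe : Q * e = Q := by
    conv_lhs => rw [← hQc]
    rw [mul_assoc, he]
    exact hQc
  have heQ : e * Q = Q := by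
    conv_lhs => rw [← hQc]
    rw [← mul_assoc, ← mul_assoc, he]
    exact hQc
  have heV : e * (z - Q) = z - Q := by rw [mul_sub, hez, heQ]
  have hVe : (z - Q) * e = z - Q := by rw [sub_mul, hze, hQe]
  refine ⟨e * a + (b - a) * Q, (b - a) * (z - Q), ?_, ?_, ?_, ?_, ?_, W * V', ?_, ?_, ?_⟩
  · symm
    calc e * (e * a + (b - a) * Q) * e
        = (e * (e * a)) * e + ((e * (b - a)) * Q) * e := by noncomm_ring
      _ = e * a + (((b - a) * e) * Q) * e := by rw [heea, heae, ← hwC e]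
      _ = e * a + ((b - a) * (e * Q)) * e := by noncomm_ring
      _ = e * a + ((b - a) * Q) * e := by rw [heQ]
      _ = e * a + (b - a) * (Q * e) := by rw [mul_assoc]
      _ = e * a + (b - a) * Q := by rw [hQe]
  · symm
    calc e * ((b - a) * (z - Q)) * e
        = ((e * (b - a)) * (z - Q)) * e := by noncomm_ring
      _ = (((b - a) * e) * (z - Q)) * e := by rw [← hwC e]
      _ = (b - a) * ((e * (z - Q)) * e) := by noncomm_ring
      _ = (b - a) * ((z - Q) * e) := by rw [heV]
      _ = (b - a) * (z - Q) := by rw [hVe]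
  · have hwz : (b - a) * z = x - e * a := by
      rw [hz_def]
      calc (b - a) * ((x - e * a) * W) = ((b - a) * (x - e * a)) * W := by rw [← mul_assoc]
        _ = ((x - e * a) * (b - a)) * W := by rw [hwC]
        _ = (x - e * a) * ((b - a) * W) := by rw [mul_assoc]
        _ = x - e * a := by rw [hwW, mul_one]
    have hsum : e * a + (b - a) * Q + (b - a) * (z - Q) = e * a + (b - a) * z := by
      rw [mul_sub]; abel
    rw [hsum, hwz]; abel
  · have hS1 : e * a + (b - a) * Q - e * a = (b - a) * Q := by abel
    have hS2 : e * a + (b - a) * Q - e * b = (b - a) * Q - e * (b - a) := by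
      rw [mul_sub]; abel
    rw [hS1, hS2, ← hwC e]
    calc ((b - a) * Q) * ((b - a) * Q - (b - a) * e)
        = ((b - a) * (Q * (b - a))) * Q - ((b - a) * (Q * (b - a))) * e := by noncomm_ring
      _ = ((b - a) * ((b - a) * Q)) * Q - ((b - a) * ((b - a) * Q)) * e := by rw [← hwC]
      _ = ((b - a) * (b - a)) * (Q * Q) - ((b - a) * (b - a)) * (Q * e) := by noncomm_ring
      _ = 0 := by rw [hQQ, hQe]; abel
  · have hA : (e * a) * ((b - a) * (z - Q)) = (b - a) * (a * (z - Q)) := by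
      calc (e * a) * ((b - a) * (z - Q)) = ((e * a) * (b - a)) * (z - Q) := by rw [← mul_assoc]
        _ = ((b - a) * (e * a)) * (z - Q) := by rw [← hwC]
        _ = (b - a) * ((e * a) * (z - Q)) := by rw [mul_assoc]
        _ = (b - a) * ((a * e) * (z - Q)) := by rw [← haC e]
        _ = (b - a) * (a * (e * (z - Q))) := by rw [mul_assoc a]
        _ = (b - a) * (a * (z - Q)) := by rw [heV]
    have hB : ((b - a) * (z - Q)) * (e * a) = (b - a) * (a * (z - Q)) := by
      calc ((b - a) * (z - Q)) * (e * a) = (b - a) * ((z - Q) * (e * a)) := by rw [mul_assoc]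
        _ = (b - a) * ((z - Q) * (a * e)) := by rw [← haC e]
        _ = (b - a) * (((z - Q) * a) * e) := by rw [← mul_assoc (z - Q) a e]
        _ = (b - a) * ((a * (z - Q)) * e) := by rw [← haC]
        _ = (b - a) * (a * ((z - Q) * e)) := by rw [mul_assoc a]
        _ = (b - a) * (a * (z - Q)) := by rw [hVe]
    have hQV : Q * (z - Q) = (z - Q) * Q := by rw [mul_sub, sub_mul, hQz, hQQ]
    have hC : ((b - a) * Q) * ((b - a) * (z - Q)) = ((b - a) * (z - Q)) * ((b - a) * Q) := by
      calc ((b - a) * Q) * ((b - a) * (z - Q))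
          = ((b - a) * (Q * (b - a))) * (z - Q) := by noncomm_ring
        _ = ((b - a) * ((b - a) * Q)) * (z - Q) := by rw [← hwC]
        _ = ((b - a) * (b - a)) * (Q * (z - Q)) := by noncomm_ring
        _ = ((b - a) * (b - a)) * ((z - Q) * Q) := by rw [hQV]
        _ = ((b - a) * ((b - a) * (z - Q))) * Q := by noncomm_ring
        _ = ((b - a) * ((z - Q) * (b - a))) * Q := by rw [hwC (z - Q)]
        _ = ((b - a) * (z - Q)) * ((b - a) * Q) := by noncomm_ring
    calc (e * a + (b - a) * Q) * ((b - a) * (z - Q))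
        = (e * a) * ((b - a) * (z - Q)) + ((b - a) * Q) * ((b - a) * (z - Q)) := by noncomm_ring
      _ = ((b - a) * (z - Q)) * (e * a) + ((b - a) * (z - Q)) * ((b - a) * Q) := by
            rw [hA, ← hB, hC]
      _ = ((b - a) * (z - Q)) * (e * a + (b - a) * Q) := by noncomm_ring
  · symm
    calc e * (W * V') * e = ((e * W) * V') * e := by noncomm_ring
      _ = ((W * e) * V') * e := by rw [← hWC]
      _ = W * ((e * V') * e) := by noncomm_ring
      _ = W * V' := by rw [hV'c]
  · calc ((b - a) * (z - Q)) * (W * V')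
        = ((b - a) * ((z - Q) * W)) * V' := by noncomm_ring
      _ = ((b - a) * (W * (z - Q))) * V' := by rw [← hWC]
      _ = (((b - a) * W) * (z - Q)) * V' := by noncomm_ring
      _ = (z - Q) * V' := by rw [hwW, one_mul]
      _ = e := hVV'
  · calc (W * V') * ((b - a) * (z - Q))
        = (W * (V' * (b - a))) * (z - Q) := by noncomm_ring
      _ = (W * ((b - a) * V')) * (z - Q) := by rw [← hwC]
      _ = ((W * (b - a)) * V') * (z - Q) := by noncomm_ring
      _ = V' * (z - Q) := by rw [hWw, one_mul]
      _ = e := hV'V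
end

section
/- Let R be an associative ring with identity and n a positive integer. Then R is strongly (x² − 2ⁿx)-clean (every r ∈ R can be written as r = s + u with s² = 2ⁿs, u a unit of R, and su = us) if and only if R is strongly clean and 2 is a unit of R. -/
/-- For `n ≥ 1`, `R` is strongly `(x² − 2ⁿx)`-clean iff `R` is strongly clean
and `2` is a unit of `R`. -/
theorem strongly_sq_sub_two_pow_clean_iff (R : Type*) [Ring R] (n : ℕ) (hn : 0 < n) :
    (∀ r : R, ∃ s u : R, s * s = 2 ^ n * s ∧ IsUnit u ∧ r = s + u ∧ s * u = u * s) ↔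
      (StronglyClean R ∧ IsUnit (2 : R)) := by
  have hcen : ∀ a : R, Commute ((2:R) ^ n) a := fun a => by
    rw [show (2:R) = 1 + 1 by norm_num]
    exact ((Commute.one_left a).add_left (Commute.one_left a)).pow_left n
  constructor
  · intro h
    have h2 : IsUnit (2 : R) := by
      obtain ⟨s, u, hs, hu, heq, hcomm⟩ := h (2 ^ n)
      obtain ⟨v, hv⟩ := hu
      have hu' : u = 2 ^ n - s := by rw [heq]; abel
      have hsu : s * u = 0 := by
        rw [hu', mul_sub, hs, (hcen s).eq, sub_self]
      have hs0 : s = 0 := by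
        calc s = s * (↑v * ↑v⁻¹) := by simp
          _ = (s * u) * ↑v⁻¹ := by rw [hv, mul_assoc]
          _ = 0 := by rw [hsu, zero_mul]
      have hpow : IsUnit ((2:R) ^ n) := by
        rw [heq, hs0, zero_add, ← hv]; exact v.isUnit
      exact (isUnit_pow_iff hn.ne').mp hpow
    refine ⟨?_, h2⟩
    intro r
    obtain ⟨v, hv⟩ := h2.pow n
    have hcinv : ∀ a : R, Commute (↑v⁻¹ : R) a := fun a =>
      ((hv ▸ hcen a : Commute (↑v : R) a)).units_inv_left
    obtain ⟨s, u, hs, hu, heq, hcomm⟩ := h (2 ^ n * r)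
    refine ⟨↑v⁻¹ * s, ↑v⁻¹ * u, ?_, (v⁻¹).isUnit.mul hu, ?_, ?_⟩
    · calc (↑v⁻¹ * s) * (↑v⁻¹ * s)
          = ↑v⁻¹ * ((s * ↑v⁻¹) * s) := by rw [mul_assoc, mul_assoc]
        _ = ↑v⁻¹ * ((↑v⁻¹ * s) * s) := by rw [← (hcinv s).eq]
        _ = ↑v⁻¹ * (↑v⁻¹ * (s * s)) := by rw [mul_assoc]
        _ = ↑v⁻¹ * ((↑v⁻¹ * ↑v) * s) := by rw [hs, hv]; simp [mul_assoc]
        _ = ↑v⁻¹ * s := by simp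
    · have : r = ↑v⁻¹ * (s + u) := by
        rw [← heq, ← hv, ← mul_assoc]; simp
      rw [this, mul_add]
    · have c1 : Commute (↑v⁻¹ * s) (↑v⁻¹ : R) :=
        (Commute.refl _).mul_left (hcinv s).symm
      have c2 : Commute (↑v⁻¹ * s) u := (hcinv u).mul_left hcomm
      exact (c1.mul_right c2).eq
  · rintro ⟨hsc, h2⟩ r
    obtain ⟨w, hw⟩ := h2.pow n
    have hcw : ∀ a : R, Commute (↑w : R) a := fun a => hw ▸ hcen a
    obtain ⟨e, u, he, hu, heq, hcomm⟩ := hsc (↑w⁻¹ * r)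
    refine ⟨↑w * e, ↑w * u, ?_, (w : Rˣ).isUnit.mul hu, ?_, ?_⟩
    · calc (↑w * e) * (↑w * e)
          = ↑w * ((e * ↑w) * e) := by rw [mul_assoc, mul_assoc]
        _ = ↑w * ((↑w * e) * e) := by rw [← (hcw e).eq]
        _ = ↑w * (↑w * (e * e)) := by rw [mul_assoc]
        _ = 2 ^ n * (↑w * e) := by rw [he, hw]
    · have : r = ↑w * (e + u) := by
        rw [← heq, ← mul_assoc]; simp
      rw [this, mul_add]
    · have c1 : Commute (↑w * e) (↑w : R) :=
        (Commute.refl _).mul_left (hcw e).symm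
      have c2 : Commute (↑w * e) u := (hcw u).mul_left hcomm
      exact (c1.mul_right c2).eq
end

section
/- Let R be an associative ring with identity. Then R is strongly (x² − 1)-clean (every r ∈ R can be written as r = s + u with s² = 1, u a unit of R, and su = us) if and only if R is strongly clean and 2 is a unit of R. -/
private lemma two_comm' {R : Type*} [Ring R] (x : R) : 2 * x = x * 2 := by
  rw [two_mul, mul_two]

private lemma inv2_comm {R : Type*} [Ring R] (t : Rˣ) (ht : (↑t : R) = 2) (x : R) :
    (↑t⁻¹ : R) * x = x * ↑t⁻¹ := by
  have h1 : (↑t : R) * ↑t⁻¹ = 1 := t.mul_inv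
  have h2 : (↑t⁻¹ : R) * ↑t = 1 := t.inv_mul
  have hx : x * ↑t = (↑t : R) * x := by rw [ht, two_comm']
  calc (↑t⁻¹ : R) * x = ↑t⁻¹ * x * (↑t * ↑t⁻¹) := by rw [h1, mul_one]
    _ = ↑t⁻¹ * (x * ↑t) * ↑t⁻¹ := by rw [← mul_assoc, ← mul_assoc]
    _ = ↑t⁻¹ * (↑t * x) * ↑t⁻¹ := by rw [hx]
    _ = (↑t⁻¹ * ↑t) * x * ↑t⁻¹ := by rw [← mul_assoc]
    _ = x * ↑t⁻¹ := by rw [h2, one_mul]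

/-- `R` is strongly `(x² − 1)`-clean iff `R` is strongly clean and `2` is a
unit of `R`. -/
theorem strongly_sq_sub_one_clean_iff (R : Type*) [Ring R] :
    (∀ r : R, ∃ s u : R, s * s = 1 ∧ IsUnit u ∧ r = s + u ∧ s * u = u * s) ↔
      (StronglyClean R ∧ IsUnit (2 : R)) := by
  constructor
  · intro h
    have h2 : IsUnit (2 : R) := by
      obtain ⟨s, u, hs, hu, heq, hc⟩ := h 1
      have hu' : u = 1 - s := by rw [heq]; noncomm_ring
      have hz : u * (1 + s) = 0 := by
        rw [hu']
        have e1 : (1 - s) * (1 + s) = 1 - s * s := by noncomm_ring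
        rw [e1, hs, sub_self]
      have hs1 : (1 : R) + s = 0 := by
        obtain ⟨w, hw⟩ := hu
        have e2 : (↑w⁻¹ : R) * (u * (1 + s)) = 0 := by rw [hz, mul_zero]
        rwa [← hw, ← mul_assoc, w.inv_mul, one_mul] at e2
      have hu2 : u = 2 := by
        have hsm : s = -1 := by
          have := eq_neg_of_add_eq_zero_right hs1
          simpa using this
        rw [hu', hsm]
        norm_num
      rw [← hu2]; exact hu
    refine ⟨?_, h2⟩
    obtain ⟨t, ht⟩ := h2
    obtain ⟨v, hv1, hv2, hvc⟩ : ∃ v : R, 2 * v = 1 ∧ v * 2 = 1 ∧ ∀ x : R, v * x = x * v := by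
      refine ⟨↑t⁻¹, ?_, ?_, inv2_comm t ht⟩
      · rw [← ht]; exact t.mul_inv
      · rw [← ht]; exact t.inv_mul
    intro r
    obtain ⟨s, u, hs, hu, heq, hc⟩ := h (2 * r - 1)
    refine ⟨(1 + s) * v, u * v, ?_, ?_, ?_, ?_⟩
    · calc (1 + s) * v * ((1 + s) * v)
          = (1 + s) * ((1 + s) * v) * v := by
            rw [mul_assoc, hvc ((1 + s) * v), ← mul_assoc]
        _ = ((1 + s) * (1 + s)) * v * v := by noncomm_ring
        _ = (s * s + 2 * s + 1) * v * v := by noncomm_ring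
        _ = (2 + 2 * s) * v * v := by rw [hs]; noncomm_ring
        _ = (1 + s) * (2 * v) * v := by noncomm_ring
        _ = (1 + s) * v := by rw [hv1, mul_one]
    · exact hu.mul ⟨⟨v, 2, hv2, hv1⟩, rfl⟩
    · calc r = 2 * r * v := by rw [two_comm' r, mul_assoc, hv1, mul_one]
        _ = (1 + (2 * r - 1)) * v := by noncomm_ring
        _ = (1 + (s + u)) * v := by rw [heq]
        _ = (1 + s) * v + u * v := by noncomm_ring
    · calc (1 + s) * v * (u * v)
          = (1 + s) * (u * v) * v := by
            rw [mul_assoc, hvc (u * v), ← mul_assoc]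
        _ = ((1 + s) * u) * v * v := by noncomm_ring
        _ = (u + s * u) * v * v := by noncomm_ring
        _ = (u + u * s) * v * v := by rw [hc]
        _ = (u * (1 + s)) * v * v := by noncomm_ring
        _ = u * ((1 + s) * v) * v := by noncomm_ring
        _ = u * (v * ((1 + s) * v)) := by rw [hvc ((1 + s) * v), mul_assoc]
        _ = u * v * ((1 + s) * v) := by noncomm_ring
  · rintro ⟨hsc, h2⟩
    obtain ⟨t, ht⟩ := h2
    obtain ⟨v, hv1, hv2, hvc⟩ : ∃ v : R, 2 * v = 1 ∧ v * 2 = 1 ∧ ∀ x : R, v * x = x * v := by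
      refine ⟨↑t⁻¹, ?_, ?_, inv2_comm t ht⟩
      · rw [← ht]; exact t.mul_inv
      · rw [← ht]; exact t.inv_mul
    intro r
    obtain ⟨e, u, he, hu, heq, hc⟩ := hsc ((r + 1) * v)
    have key : 2 * ((r + 1) * v) = r + 1 := by
      rw [two_comm' ((r + 1) * v), mul_assoc, hv2, mul_one]
    refine ⟨2 * e - 1, 2 * u, ?_, ?_, ?_, ?_⟩
    · have e1 : (2 * e - 1) * (2 * e - 1) = 4 * (e * e) - 4 * e + 1 := by noncomm_ring
      rw [e1, he]; noncomm_ring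
    · exact (ht ▸ t.isUnit).mul hu
    · have e2 : (2 * e - 1) + 2 * u = 2 * (e + u) - 1 := by noncomm_ring
      rw [e2, ← heq, key]; noncomm_ring
    · have e3 : (2 * e - 1) * (2 * u) = 4 * (e * u) - 2 * u := by noncomm_ring
      have e4 : (2 * u) * (2 * e - 1) = 4 * (u * e) - 2 * u := by noncomm_ring
      rw [e3, e4, hc]
end

section
/- Let R be an associative ring with identity. Then R is strongly clean with 2 a unit of R if and only if every a ∈ R can be expressed as a = u + v where u and v are units of R, uv = vu, and v² = 1. -/
/-- `R` is strongly clean with `2` a unit iff every element of `R` is the sum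
of a unit and a commuting square root of `1` which is a unit. -/
theorem stronglyClean_two_unit_iff (R : Type*) [Ring R] :
    (StronglyClean R ∧ IsUnit (2 : R)) ↔
      (∀ a : R, ∃ u v : R, IsUnit u ∧ IsUnit v ∧ u * v = v * u ∧ v * v = 1 ∧ a = u + v) := by
  constructor
  · rintro ⟨hSC, h2⟩ a
    obtain ⟨s, hs⟩ := h2
    have h2' : IsUnit (2 : R) := ⟨s, hs⟩
    set t : R := (↑s⁻¹ : R) with htdef
    have h2t : (2 : R) * t = 1 := by rw [← hs]; exact s.mul_inv
    have ht2 : t * (2 : R) = 1 := by rw [← hs]; exact s.inv_mul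
    have htc : ∀ x : R, t * x = x * t := by
      intro x
      have hx2 : (2 : R) * x = x * 2 := by rw [two_mul, mul_two]
      calc t * x = t * (x * (2 * t)) := by rw [h2t, mul_one]
        _ = t * ((x * 2) * t) := by rw [mul_assoc]
        _ = t * ((2 * x) * t) := by rw [hx2]
        _ = (t * 2) * (x * t) := by noncomm_ring
        _ = x * t := by rw [ht2, one_mul]
    obtain ⟨e, w, he, hw, heq, hcomm⟩ := hSC ((a + 1) * t)
    have hvv : (2 * e - 1) * (2 * e - 1) = 1 := by
      have h4 : (2 * e - 1) * (2 * e - 1) = 4 * (e * e) - 4 * e + 1 := by noncomm_ring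
      rw [h4, he]; noncomm_ring
    refine ⟨2 * w, 2 * e - 1, h2'.mul hw, ⟨⟨2 * e - 1, 2 * e - 1, hvv, hvv⟩, rfl⟩, ?_, hvv, ?_⟩
    · have h1 : (2 * w) * (2 * e - 1) = 4 * (w * e) - 2 * w := by noncomm_ring
      rw [h1, ← hcomm]; noncomm_ring
    · have ha : a + 1 = 2 * (e + w) := by
        calc a + 1 = ((a + 1) * t) * 2 := by rw [mul_assoc, ht2, mul_one]
          _ = (e + w) * 2 := by rw [heq]
          _ = 2 * (e + w) := by noncomm_ring
      have ha' : a = 2 * (e + w) - 1 := by rw [← ha]; noncomm_ring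
      rw [ha']; noncomm_ring
  · intro h
    have h2 : IsUnit (2 : R) := by
      obtain ⟨u, v, hu, hv, huv, hvv, h1⟩ := h 1
      have hu' : u = 1 - v := eq_sub_of_add_eq h1.symm
      have hzero : u * (1 + v) = 0 := by
        rw [hu']
        calc (1 - v) * (1 + v) = 1 - v * v := by noncomm_ring
          _ = 0 := by rw [hvv]; noncomm_ring
      obtain ⟨uu, huu⟩ := hu
      have h1v : (1 : R) + v = 0 := by
        have := congrArg (fun x => (↑uu⁻¹ : R) * x) hzero
        simpa [← mul_assoc, ← huu, uu.inv_mul] using this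
      have hv1 : v = -1 := eq_neg_of_add_eq_zero_left (by rw [add_comm]; exact h1v)
      have hu2 : u = 2 := by rw [hu', hv1]; norm_num
      rw [← hu2]; exact ⟨uu, huu⟩
    refine ⟨?_, h2⟩
    intro r
    obtain ⟨s, hs⟩ := h2
    set t : R := (↑s⁻¹ : R) with htdef
    have h2t : (2 : R) * t = 1 := by rw [← hs]; exact s.mul_inv
    have ht2 : t * (2 : R) = 1 := by rw [← hs]; exact s.inv_mul
    have htc : ∀ x : R, t * x = x * t := by
      intro x
      have hx2 : (2 : R) * x = x * 2 := by rw [two_mul, mul_two]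
      calc t * x = t * (x * (2 * t)) := by rw [h2t, mul_one]
        _ = t * ((x * 2) * t) := by rw [mul_assoc]
        _ = t * ((2 * x) * t) := by rw [hx2]
        _ = (t * 2) * (x * t) := by noncomm_ring
        _ = x * t := by rw [ht2, one_mul]
    obtain ⟨u, v, hu, hv, huv, hvv, heq⟩ := h (2 * r - 1)
    have htU : IsUnit t := ⟨s⁻¹, rfl⟩
    refine ⟨(1 + v) * t, u * t, ?_, hu.mul htU, ?_, ?_⟩
    · calc (1 + v) * t * ((1 + v) * t) = (1 + v) * ((1 + v) * t) * t := by
            rw [mul_assoc, mul_assoc, htc ((1 + v) * t)]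
        _ = ((1 + v) * (1 + v)) * (t * t) := by noncomm_ring
        _ = (1 + 2 * v + v * v) * (t * t) := by noncomm_ring
        _ = (2 * (1 + v)) * (t * t) := by rw [hvv]; noncomm_ring
        _ = (1 + v) * ((2 * t) * t) := by noncomm_ring
        _ = (1 + v) * t := by rw [h2t, one_mul]
    · have h2r : 2 * r = u + v + 1 := by rw [← heq]; noncomm_ring
      calc r = r * (2 * t) := by rw [h2t, mul_one]
        _ = (r * 2) * t := by rw [mul_assoc]
        _ = (2 * r) * t := by rw [mul_two, two_mul]
        _ = (u + v + 1) * t := by rw [h2r]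
        _ = (1 + v) * t + u * t := by noncomm_ring
    · calc (1 + v) * t * (u * t) = (1 + v) * (u * (t * t)) := by
            rw [mul_assoc, ← mul_assoc t u, htc u, mul_assoc]
        _ = ((1 + v) * u) * (t * t) := by noncomm_ring
        _ = (u * (1 + v)) * (t * t) := by rw [mul_add, add_mul, mul_one, one_mul, huv]
        _ = u * ((1 + v) * (t * t)) := by noncomm_ring
        _ = u * (((1 + v) * t) * t) := by rw [← mul_assoc (1 + v) t t]
        _ = u * (t * ((1 + v) * t)) := by rw [← htc ((1 + v) * t)]
        _ = u * t * ((1 + v) * t) := by rw [mul_assoc]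
end

section
/- Let R be an associative ring with identity, a ∈ R, and n a positive integer. Then the following are equivalent: (1) a = a(ua)ⁿ for some unit u of R; (2) a = ve for some element e with e^{n+1} = e and some unit v of R; (3) a = fw for some element f with f^{n+1} = f and some unit w of R. -/
private lemma aux_mul_pow {R : Type*} [Monoid R] (a b : R) (n : ℕ) :
    (a * b) ^ (n + 1) = a * (b * a) ^ n * b := by
  induction n with
  | zero => simp [mul_assoc]
  | succ m ih =>
    rw [pow_succ, ih, pow_succ]
    simp only [mul_assoc]

/-- For `a ∈ R` and `n ≥ 1`, the following are equivalent:
(1) `a = a(ua)ⁿ` for some unit `u`;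
(2) `a = ve` for some `e` with `e^{n+1} = e` and some unit `v`;
(3) `a = fw` for some `f` with `f^{n+1} = f` and some unit `w`. -/
theorem unit_times_potent_tfae (R : Type*) [Ring R] (a : R) (n : ℕ) (hn : 0 < n) :
    List.TFAE [
      ∃ u : R, IsUnit u ∧ a = a * (u * a) ^ n,
      ∃ v e : R, IsUnit v ∧ e ^ (n + 1) = e ∧ a = v * e,
      ∃ w f : R, IsUnit w ∧ f ^ (n + 1) = f ∧ a = f * w] := by
  tfae_have 1 → 2 := by
    rintro ⟨u, ⟨U, rfl⟩, h⟩
    refine ⟨↑U⁻¹, ↑U * a, ⟨U⁻¹, rfl⟩, ?_, ?_⟩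
    · rw [pow_succ', mul_assoc, ← h]
    · rw [U.inv_mul_cancel_left]
  tfae_have 2 → 1 := by
    rintro ⟨v, e, ⟨V, rfl⟩, he, rfl⟩
    refine ⟨↑V⁻¹, ⟨V⁻¹, rfl⟩, ?_⟩
    rw [V.inv_mul_cancel_left, mul_assoc, ← pow_succ', he]
  tfae_have 1 → 3 := by
    rintro ⟨u, ⟨U, rfl⟩, h⟩
    refine ⟨↑U⁻¹, a * ↑U, ⟨U⁻¹, rfl⟩, ?_, ?_⟩
    · rw [aux_mul_pow, ← h]
    · rw [U.mul_inv_cancel_right]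
  tfae_have 3 → 1 := by
    rintro ⟨w, f, ⟨W, rfl⟩, hf, rfl⟩
    refine ⟨↑W⁻¹, ⟨W⁻¹, rfl⟩, ?_⟩
    rw [← mul_assoc, Units.conj_pow', mul_assoc (↑W⁻¹ : R), mul_assoc,
      W.mul_inv_cancel_left, ← mul_assoc, ← pow_succ', hf]
  tfae_finish
end

section
/- Let R be an associative ring with identity, n ≥ 2 a natural number, and suppose R is strongly (xⁿ − x)-clean (every r ∈ R can be written as r = s + u with sⁿ = s, u a unit of R, and su = us). Then for every a ∈ R, either (i) a = u + v for some units u, v of R with v^{n−1} = 1 and uv = vu, or (ii) there exist a nonzero idempotent in the left ideal Ra and a nonzero idempotent in the right ideal aR. -/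
/-- If `R` is strongly `(xⁿ − x)`-clean with `n ≥ 2`, then every `a ∈ R`
either is a sum `u + v` of commuting units with `v^{n−1} = 1`, or both `Ra`
and `aR` contain nonzero idempotents. -/
theorem unit_sum_or_idempotent (R : Type*) [Ring R] (n : ℕ) (hn : 2 ≤ n)
    (hR : ∀ r : R, ∃ s u : R, s ^ n = s ∧ IsUnit u ∧ r = s + u ∧ s * u = u * s) :
    ∀ a : R,
      (∃ u v : R, IsUnit u ∧ IsUnit v ∧ v ^ (n - 1) = 1 ∧ u * v = v * u ∧ a = u + v) ∨
      ((∃ g : R, g ≠ 0 ∧ g * g = g ∧ ∃ r : R, g = r * a) ∧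
        (∃ g : R, g ≠ 0 ∧ g * g = g ∧ ∃ r : R, g = a * r)) := by
  intro a
  obtain ⟨s, u, hs, hu, ha, hsu⟩ := hR a
  have hn1 : n - 1 + 1 = n := by omega
  have hes : s ^ (n - 1) * s = s := by
    rw [← pow_succ, hn1, hs]
  have hse : s * s ^ (n - 1) = s := by
    rw [← pow_succ', hn1, hs]
  by_cases hS : IsUnit s
  · left
    obtain ⟨S, hS'⟩ := hS
    refine ⟨u, s, hu, ⟨S, hS'⟩, ?_, hsu.symm, by rw [ha, add_comm]⟩
    have h1 : s ^ (n - 1) * s = 1 * s := by rw [hes, one_mul]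
    calc s ^ (n - 1) = s ^ (n - 1) * s * ↑S⁻¹ := by
          rw [← hS', mul_assoc, S.mul_inv, mul_one, hS']
      _ = 1 * s * ↑S⁻¹ := by rw [h1]
      _ = 1 := by rw [one_mul, ← hS', S.mul_inv]
  · right
    set e := s ^ (n - 1) with he
    have hee : e * e = e := by
      rw [he, ← pow_add]
      have h2 : n - 1 + (n - 1) = n + (n - 2) := by omega
      rw [h2, pow_add, hs, ← pow_succ']
      congr 1
      omega
    have hne : e ≠ 1 := by
      intro h
      apply hS
      have h2 : n - 2 + 1 = n - 1 := by omega
      refine ⟨⟨s, s ^ (n - 2), ?_, ?_⟩, rfl⟩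
      · rw [← pow_succ', h2, ← he, h]
      · rw [← pow_succ, h2, ← he, h]
    have hg0 : (1 : R) - e ≠ 0 := sub_ne_zero_of_ne (Ne.symm hne)
    have hgg : (1 - e) * (1 - e) = 1 - e := by
      rw [sub_mul, one_mul, mul_sub, mul_one, hee]
      abel
    have hcu : e * u = u * e := by
      have hc : Commute s u := hsu
      exact (hc.pow_left (n - 1))
    have hla : (1 - e) * a = u * (1 - e) := by
      rw [ha, mul_add, sub_mul, one_mul, hes, sub_self, zero_add,
        sub_mul, one_mul, mul_sub, mul_one, hcu]
    have hra : a * (1 - e) = u * (1 - e) := by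
      rw [ha, add_mul, mul_sub, mul_one, hse, sub_self, zero_add]
    obtain ⟨U, hU⟩ := hu
    have hc2 : u * (1 - e) = (1 - e) * u := by
      rw [mul_sub, mul_one, sub_mul, one_mul, hcu]
    constructor
    · refine ⟨1 - e, hg0, hgg, ↑U⁻¹ * (1 - e), ?_⟩
      symm
      calc (↑U⁻¹ * (1 - e)) * a = ↑U⁻¹ * ((1 - e) * a) := by rw [mul_assoc]
        _ = ↑U⁻¹ * (u * (1 - e)) := by rw [hla]
        _ = (↑U⁻¹ * u) * (1 - e) := by rw [mul_assoc]
        _ = 1 - e := by rw [← hU, U.inv_mul, one_mul]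
    · refine ⟨1 - e, hg0, hgg, (1 - e) * ↑U⁻¹, ?_⟩
      symm
      calc a * ((1 - e) * ↑U⁻¹) = (a * (1 - e)) * ↑U⁻¹ := by rw [mul_assoc]
        _ = (u * (1 - e)) * ↑U⁻¹ := by rw [hra]
        _ = ((1 - e) * u) * ↑U⁻¹ := by rw [hc2]
        _ = (1 - e) * (u * ↑U⁻¹) := by rw [mul_assoc]
        _ = 1 - e := by rw [← hU, U.mul_inv, mul_one]
end

section
/- Let R be an associative ring with identity, a, b ∈ C(R), and n a positive integer. Then R is strongly (ax^{2n} − bx)-clean (every r ∈ R can be written as r = s + u with as^{2n} − bs = 0, u a unit of R, and su = us) if and only if R is strongly (ax^{2n} + bx)-clean (every r ∈ R can be written as r = s + u with as^{2n} + bs = 0, u a unit of R, and su = us). -/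
/-- For `a, b` central and `n ≥ 1`, `R` is strongly `(ax^{2n} − bx)`-clean iff
`R` is strongly `(ax^{2n} + bx)`-clean. -/
theorem strongly_ax2n_sub_bx_clean_iff (R : Type*) [Ring R] (a b : R)
    (ha : a ∈ Set.center R) (hb : b ∈ Set.center R) (n : ℕ) (hn : 0 < n) :
    (∀ r : R, ∃ s u : R, a * s ^ (2 * n) - b * s = 0 ∧ IsUnit u ∧ r = s + u ∧ s * u = u * s) ↔
      (∀ r : R, ∃ s u : R, a * s ^ (2 * n) + b * s = 0 ∧ IsUnit u ∧ r = s + u ∧ s * u = u * s) := by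
  have hev : Even (2 * n) := even_two_mul n
  constructor
  · intro h r
    obtain ⟨s, u, h1, h2, h3, h4⟩ := h (-r)
    refine ⟨-s, -u, ?_, h2.neg, ?_, ?_⟩
    · rw [hev.neg_pow, mul_neg, ← sub_eq_add_neg, h1]
    · rw [← neg_add, ← h3, neg_neg]
    · simp [neg_mul, mul_neg, h4]
  · intro h r
    obtain ⟨s, u, h1, h2, h3, h4⟩ := h (-r)
    refine ⟨-s, -u, ?_, h2.neg, ?_, ?_⟩
    · rw [hev.neg_pow, mul_neg, sub_neg_eq_add, h1]
    · rw [← neg_add, ← h3, neg_neg]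
    · simp [neg_mul, mul_neg, h4]
end
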